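/- arXiv:math/0308294 — 10 statements merged into one kernel-verified Lean document; each statement's English description precedes it below -/
import Mathlib

section
/- Let X be a compact metric space and f : X → X a homeomorphism. Then f is positively expansive (i.e., there exists ρ > 0 such that for all distinct x, y ∈ X there exists n ≥ 0 with d(fⁿ(x), fⁿ(y)) > ρ) if and only if X is finite. -/
open Filter Topology

/-!
By compactness, positive expansivity is uniform: pairs at distance at least `ε` are pushed
more than `ρ` apart within a bounded number `N(ε)` of steps. Hence `f⁻¹` keeps `δ`-close pairs
`ρ`-close forever, for some `δ > 0`, and then even makes them `ε`-close after `N(ε)` steps.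
Pulling back a cover of `X` by `k` sets of diameter `< δ` along `f^[N(ε)]` gives, for every
`ε > 0`, a cover by `k` sets of diameter `< ε`, so `X` has at most `k` points.
-/

section MetricSpace

variable {X : Type*} [MetricSpace X]

theorem exists_pos_lt_dist_of_finite [Finite X] :
    ∃ ρ > (0 : ℝ), ∀ x y : X, x ≠ y → ρ < dist x y := by
  have h : ∀ᶠ ρ in 𝓝[>] (0 : ℝ), ∀ x y : X, x ≠ y → ρ < dist x y :=
    eventually_all.2 fun x => eventually_all.2 fun y => by
      by_cases hxy : x = y
      · exact .of_forall fun _ h => absurd hxy h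
      · exact (eventually_nhdsWithin_of_eventually_nhds
          (eventually_lt_nhds (dist_pos.2 hxy))).mono fun _ h _ => h
  exact (h.and self_mem_nhdsWithin).exists.imp fun _ h => ⟨h.2, h.1⟩

theorem finite_of_forall_exists_fin_coloring (k : ℕ)
    (h : ∀ ε > 0, ∃ c : X → Fin k, ∀ x y, c x = c y → dist x y < ε) : Finite X := by
  by_contra hX
  have := not_finite_iff_infinite.1 hX
  obtain ⟨s, hs⟩ := Infinite.exists_subset_card_eq X (k + 1)
  obtain ⟨ε, hε, hsep⟩ := exists_pos_lt_dist_of_finite (X := s)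
  obtain ⟨c, hc⟩ := h ε hε
  obtain ⟨y, z, hyz, hcyz⟩ :=
    Fintype.exists_ne_map_eq_of_card_lt (fun p : s => c p) (by simp [hs])
  exact lt_asymm (hsep y z hyz) (hc y z hcyz)

theorem exists_fin_coloring_dist_lt [CompactSpace X] {δ : ℝ} (hδ : 0 < δ) :
    ∃ k, ∃ c : X → Fin k, ∀ x y, c x = c y → dist x y < δ := by
  obtain ⟨t, -, ht, hcover⟩ := Metric.finite_approx_of_totallyBounded
    (isCompact_univ (X := X)).totallyBounded (δ / 2) (half_pos hδ)
  have hnear : ∀ x, ∃ z : t, dist x (z : X) < δ / 2 := fun x => by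
    simpa using hcover (Set.mem_univ x)
  choose c hc using hnear
  have := ht.to_subtype
  refine ⟨Nat.card t, Finite.equivFin t ∘ c, fun x y hxy => ?_⟩
  have hxy : c x = c y := (Finite.equivFin t).injective hxy
  calc dist x y ≤ dist x (c x) + dist y (c y) := by rw [hxy]; exact dist_triangle_right _ _ _
    _ < δ / 2 + δ / 2 := add_lt_add (hc x) (hc y)
    _ = δ := add_halves δ

theorem exists_uniform_separation [CompactSpace X] {Y : Type*} [PseudoMetricSpace Y]
    {F : ℕ → X → Y} (hF : ∀ n, Continuous (F n)) {ρ : ℝ}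
    (hsep : ∀ x y, x ≠ y → ∃ n, ρ < dist (F n x) (F n y)) {ε : ℝ} (hε : 0 < ε) :
    ∃ N, ∀ x y, ε ≤ dist x y → ∃ n ≤ N, ρ < dist (F n x) (F n y) := by
  let U : ℕ → Set (X × X) := fun N => ⋃ n ∈ Set.Iic N, {p | ρ < dist (F n p.1) (F n p.2)}
  have hU : ∀ N, IsOpen (U N) := fun N => isOpen_biUnion fun n _ =>
    isOpen_lt continuous_const (((hF n).comp continuous_fst).dist ((hF n).comp continuous_snd))
  have hcover : {p : X × X | ε ≤ dist p.1 p.2} ⊆ ⋃ N, U N := fun p hp => by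
    obtain ⟨n, hn⟩ := hsep p.1 p.2 (dist_pos.1 (hε.trans_le hp))
    exact Set.mem_iUnion.2 ⟨n, Set.mem_biUnion (Set.mem_Iic.2 le_rfl) hn⟩
  obtain ⟨N, hN⟩ := (isClosed_le continuous_const continuous_dist).isCompact.elim_directed_cover
    U hU hcover
    (Monotone.directed_le fun _ _ h => Set.biUnion_subset_biUnion_left (Set.Iic_subset_Iic.2 h))
  exact ⟨N, fun x y hxy => by simpa [U] using hN (show (x, y) ∈ _ from hxy)⟩

end MetricSpace

theorem Function.LeftInverse.iterate_iterate_of_le {α : Type*} {f g : α → α}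
    (h : Function.LeftInverse g f) {m n : ℕ} (hmn : m ≤ n) (x : α) :
    g^[m] (f^[n] x) = f^[n - m] x := by
  obtain ⟨k, rfl⟩ := Nat.exists_eq_add_of_le hmn
  rw [Nat.add_sub_cancel_left, Function.iterate_add_apply, h.iterate m]

def PositivelyExpansiveWith {X : Type*} [MetricSpace X] (f : X → X) (ρ : ℝ) : Prop :=
  ∀ x y, x ≠ y → ∃ n : ℕ, ρ < dist (f^[n] x) (f^[n] y)

namespace PositivelyExpansiveWith

variable {X : Type*} [MetricSpace X] [CompactSpace X] {f : X ≃ₜ X} {ρ : ℝ}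

theorem exists_forall_dist_iterate_symm_le (hf : PositivelyExpansiveWith f ρ) (hρ : 0 < ρ) :
    ∃ δ > 0, ∀ a b, dist a b < δ → ∀ m, dist (f.symm^[m] a) (f.symm^[m] b) ≤ ρ := by
  have hf' : ∀ x y, x ≠ y → ∃ n, ρ < dist (f^[n + 1] x) (f^[n + 1] y) := fun x y hxy => by
    simpa only [Function.iterate_succ_apply] using hf (f x) (f y) (f.injective.ne hxy)
  obtain ⟨N, hN⟩ := exists_uniform_separation (fun n => f.continuous.iterate (n + 1)) hf' hρ
  have hG : UniformContinuous fun a (i : Fin (N + 1)) => f.symm^[i] a :=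
    uniformContinuous_pi.2 fun i =>
      .iterate _ i (CompactSpace.uniformContinuous_of_continuous f.symm.continuous)
  obtain ⟨δ, hδ, hδG⟩ := Metric.uniformContinuous_iff.1 hG ρ hρ
  refine ⟨δ, hδ, fun a b hab m => ?_⟩
  -- by uniform expansivity, backward orbits that are `ρ`-apart at a time `m > N` are already
  -- `ρ`-apart at an earlier time `m - (n + 1)`
  induction m using Nat.strong_induction_on with
  | _ m ih =>
    by_contra! hm
    by_cases hmN : m ≤ N
    · exact hm.not_ge <|
        (dist_le_pi_dist _ _ (⟨m, Nat.lt_succ_of_le hmN⟩ : Fin (N + 1))).trans (hδG hab).le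
    · obtain ⟨n, hnN, hn⟩ := hN _ _ hm.le
      have hleft : Function.LeftInverse f f.symm := f.apply_symm_apply
      rw [hleft.iterate_iterate_of_le (by omega), hleft.iterate_iterate_of_le (by omega)] at hn
      exact hn.not_ge (ih _ (by omega))

theorem exists_dist_lt_of_dist_iterate_lt (hf : PositivelyExpansiveWith f ρ) {δ : ℝ}
    (hback : ∀ a b, dist a b < δ → ∀ m, dist (f.symm^[m] a) (f.symm^[m] b) ≤ ρ)
    {ε : ℝ} (hε : 0 < ε) : ∃ M, ∀ x y, dist (f^[M] x) (f^[M] y) < δ → dist x y < ε := by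
  obtain ⟨N, hN⟩ := exists_uniform_separation (fun n => f.continuous.iterate n) hf hε
  refine ⟨N, fun x y hxy => ?_⟩
  by_contra! h
  obtain ⟨n, hnN, hn⟩ := hN x y h
  have hleft : Function.LeftInverse f.symm f := f.symm_apply_apply
  have hclose := hback _ _ hxy (N - n)
  rw [hleft.iterate_iterate_of_le (Nat.sub_le N n), hleft.iterate_iterate_of_le (Nat.sub_le N n),
    Nat.sub_sub_self hnN] at hclose
  exact hn.not_ge hclose

theorem finite (hf : PositivelyExpansiveWith f ρ) (hρ : 0 < ρ) : Finite X := by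
  obtain ⟨δ, hδ, hback⟩ := hf.exists_forall_dist_iterate_symm_le hρ
  obtain ⟨k, c, hc⟩ := exists_fin_coloring_dist_lt (X := X) hδ
  refine finite_of_forall_exists_fin_coloring k fun ε hε => ?_
  obtain ⟨M, hM⟩ := hf.exists_dist_lt_of_dist_iterate_lt hback hε
  exact ⟨c ∘ f^[M], fun x y hxy => hM x y (hc _ _ hxy)⟩

end PositivelyExpansiveWith

theorem stmt0 {X : Type*} [MetricSpace X] [CompactSpace X] (f : X ≃ₜ X) :
    (∃ ρ > (0:ℝ), ∀ x y : X, x ≠ y → ∃ n : ℕ, ρ < dist ((⇑f)^[n] x) ((⇑f)^[n] y)) ↔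
      Finite X := by
  constructor
  · rintro ⟨ρ, hρ, hf⟩
    exact PositivelyExpansiveWith.finite hf hρ
  · intro _
    obtain ⟨ρ, hρ, hsep⟩ := exists_pos_lt_dist_of_finite (X := X)
    exact ⟨ρ, hρ, fun x y hxy => ⟨0, hsep x y hxy⟩⟩
end

section
/- Let X be a locally compact metric space and f : X → X a continuous map. If f is bounded (there exists a compact set W such that the forward orbit of every point of X intersects W), then there exists a compact forward invariant window, i.e., a compact set W₁ with f(W₁) ⊆ W₁ such that the forward orbit of every point of X intersects W₁. -/
/-!
Enlarge the window `W` to a compact `K` with `W ⊆ interior K`. Every point then returns to the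
open set `interior K` after at least one step, and by compactness of `K` the return time is bounded
on `K` by some `N`. The union of the first `N + 1` images `f^[j] '' K` is compact, contains `K`,
and is forward invariant: the last image `f^[N] '' K` is mapped into an earlier one, because every
point of `K` comes back to `K` within `N` steps.
-/

open Set Function

theorem mapsTo_biUnion_image_iterate_of_return {X : Type*} {f : X → X} {K : Set X} {N : ℕ}
    (hret : ∀ x ∈ K, ∃ m, 1 ≤ m ∧ m ≤ N ∧ f^[m] x ∈ K) :
    MapsTo f (⋃ j ≤ N, f^[j] '' K) (⋃ j ≤ N, f^[j] '' K) := by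
  simp only [MapsTo, mem_iUnion, mem_image]
  rintro _ ⟨j, hj, x, hx, rfl⟩
  rw [← iterate_succ_apply' f j x]
  rcases hj.lt_or_eq with hj | rfl
  · exact ⟨j + 1, hj, x, hx, rfl⟩
  · obtain ⟨m, hm1, hmN, hmK⟩ := hret x hx
    refine ⟨j + 1 - m, by omega, f^[m] x, hmK, ?_⟩
    rw [← iterate_add_apply, Nat.sub_add_cancel (by omega)]

theorem IsCompact.exists_bound_return_time {X : Type*} [TopologicalSpace X] {f : X → X}
    {K : Set X} (hK : IsCompact K) (hf : Continuous f)
    (hret : ∀ x ∈ K, ∃ n, 1 ≤ n ∧ f^[n] x ∈ interior K) :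
    ∃ N, ∀ x ∈ K, ∃ m, 1 ≤ m ∧ m ≤ N ∧ f^[m] x ∈ K := by
  choose n hn1 hn2 using hret
  obtain ⟨t, hcover⟩ := hK.elim_nhds_subcover' (fun x hx => f^[n x hx] ⁻¹' interior K)
    (fun x hx => (isOpen_interior.preimage (hf.iterate _)).mem_nhds (hn2 x hx))
  refine ⟨t.sup fun x : K => n x x.2, fun x hx => ?_⟩
  obtain ⟨y, hyt, hxy⟩ := mem_iUnion₂.mp (hcover hx)
  exact ⟨n y y.2, hn1 y y.2, Finset.le_sup (f := fun x : K => n x x.2) hyt, interior_subset hxy⟩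

theorem stmt1 {X : Type*} [MetricSpace X] [LocallyCompactSpace X]
    (f : X → X) (hf : Continuous f)
    (hbdd : ∃ W : Set X, IsCompact W ∧ ∀ x : X, ∃ n : ℕ, f^[n] x ∈ W) :
    ∃ W₁ : Set X, IsCompact W₁ ∧ f '' W₁ ⊆ W₁ ∧ ∀ x : X, ∃ n : ℕ, f^[n] x ∈ W₁ := by
  obtain ⟨W, hW, hwin⟩ := hbdd
  obtain ⟨K, hK, hWK⟩ := exists_compact_superset hW
  have hret : ∀ x ∈ K, ∃ n, 1 ≤ n ∧ f^[n] x ∈ interior K := fun x _ => by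
    obtain ⟨m, hm⟩ := hwin (f x)
    exact ⟨m + 1, m.succ_pos, hWK (by rwa [iterate_succ_apply])⟩
  obtain ⟨N, hN⟩ := hK.exists_bound_return_time hf hret
  refine ⟨⋃ j ≤ N, f^[j] '' K, ?_, (mapsTo_biUnion_image_iterate_of_return hN).image_subset,
    fun x => ?_⟩
  · exact (finite_Iic N).isCompact_biUnion fun j _ => hK.image (hf.iterate j)
  · obtain ⟨m, hm⟩ := hwin x
    exact ⟨m, mem_biUnion (x := 0) (Nat.zero_le N) ⟨_, interior_subset (hWK hm), rfl⟩⟩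
end

section
/- Let X be a locally compact metric space and f : X → X a continuous map. If f is bounded, then there exists a compact window W₁ with f(W₁) ⊆ int(W₁). -/
/-!
Let `W` be the given window. Points whose orbit enters a neighbourhood `P m` of `W` at some time
`m ≤ N`, after staying in neighbourhoods `C i` of a large compact set at the times `i < m`, form an
open set `U`. If the `P m` and the `C i` shrink with the index, each one containing the closure of
the next, then applying `f` lowers the entry time by one, so `f` maps the closure of `U` into `U`;
the points of the closure whose entry time is `0` lie near `W`, and they come back by compactness.
Thickenings of compact sets by decreasing radii make all the sets relatively compact, so
`W₁ = closure U` is the required window.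
-/

open Metric Set Function

section HitSet

variable {X : Type*} {f : X → X}

def hitSet (f : X → X) (P C : ℕ → Set X) (N : ℕ) : Set X :=
  ⋃ m ≤ N, (⋂ i < m, f^[i] ⁻¹' C i) ∩ f^[m] ⁻¹' P m

theorem subset_hitSet (P C : ℕ → Set X) (N : ℕ) : P 0 ⊆ hitSet f P C N := fun x hx =>
  mem_iUnion₂.2 ⟨0, N.zero_le, by simp, hx⟩

theorem hitSet_subset_union (P C : ℕ → Set X) (N : ℕ) : hitSet f P C N ⊆ P 0 ∪ C 0 := by
  intro x hx
  obtain ⟨m, -, hC, hP⟩ := mem_iUnion₂.1 hx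
  rcases m with _ | m
  · exact Or.inl hP
  · exact Or.inr (mem_iInter₂.1 hC 0 m.succ_pos)

theorem hitSet_mono {P P' C C' : ℕ → Set X} (hP : ∀ m, P m ⊆ P' m) (hC : ∀ i, C i ⊆ C' i)
    (N : ℕ) : hitSet f P C N ⊆ hitSet f P' C' N :=
  iUnion₂_mono fun m _ =>
    inter_subset_inter (iInter₂_mono fun i _ => preimage_mono (hC i)) (preimage_mono (hP m))

theorem isOpen_hitSet [TopologicalSpace X] (hf : Continuous f) {P C : ℕ → Set X} (hP : ∀ m, IsOpen (P m))
    (hC : ∀ i, IsOpen (C i)) (N : ℕ) : IsOpen (hitSet f P C N) :=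
  isOpen_biUnion fun m _ =>
    ((finite_Iio m).isOpen_biInter fun i _ => (hC i).preimage (hf.iterate i)).inter
      ((hP m).preimage (hf.iterate m))

theorem isClosed_hitSet [TopologicalSpace X] (hf : Continuous f) {P C : ℕ → Set X} (hP : ∀ m, IsClosed (P m))
    (hC : ∀ i, IsClosed (C i)) (N : ℕ) : IsClosed (hitSet f P C N) :=
  (finite_Iic N).isClosed_biUnion fun m _ =>
    (isClosed_biInter fun i _ => (hC i).preimage (hf.iterate i)).inter
      ((hP m).preimage (hf.iterate m))

theorem mapsTo_hitSet_closure [TopologicalSpace X] {P C : ℕ → Set X} (hP : ∀ m, closure (P (m + 1)) ⊆ P m)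
    (hC : ∀ i, closure (C (i + 1)) ⊆ C i) {N : ℕ} (hret : MapsTo f (closure (P 0)) (hitSet f P C N)) :
    MapsTo f (hitSet f (fun m => closure (P m)) (fun i => closure (C i)) N) (hitSet f P C N) := by
  intro y hy
  obtain ⟨m, hmN, hyC, hyP⟩ := mem_iUnion₂.1 hy
  rcases m with _ | k
  · exact hret hyP
  · refine mem_iUnion₂.2 ⟨k, k.le_succ.trans hmN, mem_iInter₂.2 fun i hi => ?_, ?_⟩
    · have hfy : f^[i] (f y) ∈ closure (C (i + 1)) := by
        rw [← iterate_succ_apply]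
        exact mem_iInter₂.1 hyC (i + 1) (Nat.succ_lt_succ hi)
      exact hC i hfy
    · have hfy : f^[k] (f y) ∈ closure (P (k + 1)) := by
        rwa [← iterate_succ_apply]
      exact hP k hfy

end HitSet

theorem exists_uniform_hittingTime {X : Type*} [TopologicalSpace X] {f : X → X}
    (hf : Continuous f) {K V : Set X} (hK : IsCompact K) (hV : IsOpen V)
    (h : ∀ x ∈ K, ∃ n, f^[n] x ∈ V) : ∃ N, ∀ x ∈ K, ∃ n ≤ N, f^[n] x ∈ V := by
  obtain ⟨t, ht⟩ := hK.elim_finite_subcover (fun n => f^[n] ⁻¹' V)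
    (fun n => hV.preimage (hf.iterate n)) fun x hx => mem_iUnion.2 (h x hx)
  refine ⟨t.sup id, fun x hx => ?_⟩
  obtain ⟨n, hn, hxn⟩ := mem_iUnion₂.1 (ht hx)
  exact ⟨n, Finset.le_sup (f := id) hn, hxn⟩

section Thickening

variable {X : Type*} [MetricSpace X]

theorem closure_thickening_subset_thickening {r r' : ℝ} (hr : 0 ≤ r) (hrr' : r < r')
    (S : Set X) : closure (thickening r S) ⊆ thickening r' S :=
  (closure_thickening_subset_cthickening r S).trans
    (cthickening_subset_thickening' (hr.trans_lt hrr') hrr' S)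

theorem IsCompact.exists_shrinking_nhds [LocallyCompactSpace X] {S : Set X} (hS : IsCompact S) :
    ∃ V, IsOpen V ∧ S ⊆ V ∧ ∃ Q : ℕ → Set X, (∀ m, IsOpen (Q m)) ∧ (∀ m, V ⊆ Q m) ∧
      (∀ m, closure (Q (m + 1)) ⊆ Q m) ∧ IsCompact (closure (Q 0)) := by
  obtain ⟨δ, hδ, hcpt⟩ := hS.exists_isCompact_cthickening
  set r := δ / 2
  have hr : 0 < r := half_pos hδ
  refine ⟨thickening r S, isOpen_thickening, self_subset_thickening hr S,
    fun m => thickening (r + r / 2 ^ m) S, fun m => isOpen_thickening,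
    fun m => thickening_mono (le_add_of_nonneg_right (by positivity)) S, fun m => ?_, ?_⟩
  · refine closure_thickening_subset_thickening (by positivity) ?_ S
    gcongr
    · norm_num
    · exact m.lt_succ_self
  · refine hcpt.of_isClosed_subset isClosed_closure
      ((closure_thickening_subset_cthickening _ S).trans (cthickening_mono ?_ S))
    simp [r]

end Thickening

theorem stmt2 {X : Type*} [MetricSpace X] [LocallyCompactSpace X]
    (f : X → X) (hf : Continuous f)
    (hbdd : ∃ W : Set X, IsCompact W ∧ ∀ x : X, ∃ n : ℕ, f^[n] x ∈ W) :
    ∃ W₁ : Set X, IsCompact W₁ ∧ f '' W₁ ⊆ interior W₁ ∧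
      ∀ x : X, ∃ n : ℕ, f^[n] x ∈ W₁ := by
  obtain ⟨W, hWc, hW⟩ := hbdd
  obtain ⟨V, hVo, hWV, P, hPo, hVP, hP, hP0⟩ := hWc.exists_shrinking_nhds
  have hK : IsCompact (f '' closure (P 0)) := hP0.image hf
  obtain ⟨N, hN⟩ := exists_uniform_hittingTime hf hK hVo fun x _ => (hW x).imp fun _ hn => hWV hn
  have hR : IsCompact (⋃ j ∈ Finset.range N, f^[j] '' (f '' closure (P 0))) :=
    (Finset.range N).isCompact_biUnion fun j _ => hK.image (hf.iterate j)
  obtain ⟨V', -, hRV', C, hCo, hV'C, hC, hC0⟩ := hR.exists_shrinking_nhds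
  have hret : MapsTo f (closure (P 0)) (hitSet f P C N) := by
    intro y hy
    obtain ⟨n, hnN, hn⟩ := hN (f y) (mem_image_of_mem f hy)
    refine mem_iUnion₂.2 ⟨n, hnN, mem_iInter₂.2 fun i hi => hV'C i (hRV' ?_), hVP n hn⟩
    exact mem_biUnion (Finset.mem_range.2 (hi.trans_le hnN)) (mem_image_of_mem _ ⟨y, hy, rfl⟩)
  set U := hitSet f P C N
  have hUcl : closure U ⊆ hitSet f (fun m => closure (P m)) (fun i => closure (C i)) N :=
    closure_minimal (hitSet_mono (fun m => subset_closure) (fun i => subset_closure) N)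
      (isClosed_hitSet hf (fun _ => isClosed_closure) (fun _ => isClosed_closure) N)
  refine ⟨closure U, (hP0.union hC0).of_isClosed_subset isClosed_closure
    (hUcl.trans (hitSet_subset_union _ _ N)), ?_, fun x => ?_⟩
  · exact ((mapsTo_hitSet_closure hP hC hret).mono_left hUcl).image_subset.trans
      (interior_maximal subset_closure (isOpen_hitSet hf hPo hCo N))
  · obtain ⟨n, hn⟩ := hW x
    exact ⟨n, subset_closure (subset_hitSet P C N (hVP 0 (hWV hn)))⟩
end

section
/- Let X be a locally compact metric space and f : X → X a continuous map. If there exists a compact set V such that for every x ∈ X the ω-limit set ω(x) is nonempty and contained in V, then f is bounded (admits a compact window). -/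
open Set Topology

theorem exists_iterate_mem_of_mem_closure_iterates {X : Type*} [TopologicalSpace X]
    {f : X → X} {x y : X} {N : ℕ} {U : Set X}
    (hy : y ∈ closure (⋃ n > N, {f^[n] x})) (hU : U ∈ 𝓝 y) :
    ∃ n > N, f^[n] x ∈ U := by
  obtain ⟨z, hzU, hz⟩ := mem_closure_iff_nhds.1 hy U hU
  simp only [mem_iUnion, mem_singleton_iff] at hz
  obtain ⟨n, hn, rfl⟩ := hz
  exact ⟨n, hn, hzU⟩

/-- Any compact neighbourhood of `V` is a window: it is a neighbourhood of a point of `ω(x)`,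
so the orbit of `x` enters it. -/
theorem stmt3_general {X : Type*} [MetricSpace X] [LocallyCompactSpace X]
    (f : X → X)
    (h : ∃ V : Set X, IsCompact V ∧ ∀ x : X,
      (⋂ N : ℕ, closure (⋃ n > N, {f^[n] x})).Nonempty ∧
      (⋂ N : ℕ, closure (⋃ n > N, {f^[n] x})) ⊆ V) :
    ∃ W : Set X, IsCompact W ∧ ∀ x : X, ∃ n : ℕ, f^[n] x ∈ W := by
  obtain ⟨V, hV, hω⟩ := h
  obtain ⟨K, hK, hVK⟩ := exists_compact_superset hV
  refine ⟨K, hK, fun x => ?_⟩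
  obtain ⟨y, hy⟩ := (hω x).1
  have hK_nhds : K ∈ 𝓝 y := mem_interior_iff_mem_nhds.1 (hVK ((hω x).2 hy))
  obtain ⟨n, -, hn⟩ := exists_iterate_mem_of_mem_closure_iterates (mem_iInter.1 hy 0) hK_nhds
  exact ⟨n, hn⟩

theorem stmt3 {X : Type*} [MetricSpace X] [LocallyCompactSpace X]
    (f : X → X) (hf : Continuous f)
    (h : ∃ V : Set X, IsCompact V ∧ ∀ x : X,
      (⋂ N : ℕ, closure (⋃ n > N, {f^[n] x})).Nonempty ∧
      (⋂ N : ℕ, closure (⋃ n > N, {f^[n] x})) ⊆ V) :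
    ∃ W : Set X, IsCompact W ∧ ∀ x : X, ∃ n : ℕ, f^[n] x ∈ W :=
  stmt3_general f h
end

section
/- Let X be a compact metric space and f : X → X a positively expansive homeomorphism. Then there exists ε > 0 such that for all x, y ∈ X with d(x,y) < ε, d(f⁻ⁿ(x), f⁻ⁿ(y)) → 0 as n → ∞. -/
/-!
By compactness, positive expansivity is uniform: for every `δ > 0` there is `N` such that two
points whose first `N` forward iterates stay `c`-close are already `δ`-close. Backward orbits
of sufficiently close points stay `c`-close forever; at time `n ≥ N` the `N` forward iterates
of the backward iterates are again backward iterates, so they are `δ`-close.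
-/

open Filter Topology

theorem Function.LeftInverse.iterate_apply_iterate_of_le {α : Type*} {f g : α → α}
    (h : Function.LeftInverse f g) {k n : ℕ} (hkn : k ≤ n) (x : α) :
    f^[k] (g^[n] x) = g^[n - k] x := by
  obtain ⟨j, rfl⟩ := Nat.exists_eq_add_of_le hkn
  rw [Function.iterate_add_apply, (h.iterate k) (g^[j] x), Nat.add_sub_cancel_left]

section

variable {X : Type*} [MetricSpace X]

def IsPositivelyExpansiveWith (f : X → X) (c : ℝ) : Prop :=
  ∀ x y : X, x ≠ y → ∃ n : ℕ, c < dist (f^[n] x) (f^[n] y)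

namespace IsPositivelyExpansiveWith

variable [CompactSpace X] {f : X → X} {c : ℝ}

theorem exists_dist_lt (hexp : IsPositivelyExpansiveWith f c) (hf : Continuous f)
    {δ : ℝ} (hδ : 0 < δ) :
    ∃ N : ℕ, ∀ x y : X, (∀ n ≤ N, dist (f^[n] x) (f^[n] y) ≤ c) → dist x y < δ := by
  let far : Set (X × X) := {p | δ ≤ dist p.1 p.2}
  let shadow (N : ℕ) : Set (X × X) := {p | ∀ n ≤ N, dist (f^[n] p.1) (f^[n] p.2) ≤ c}
  have hfar : IsCompact far := (isClosed_le continuous_const continuous_dist).isCompact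
  have hshadow : ∀ N, IsClosed (shadow N) := fun N => by
    simp only [shadow, Set.ofPred_forall]
    exact isClosed_biInter fun n _ => isClosed_le
      (((hf.iterate n).comp continuous_fst).dist ((hf.iterate n).comp continuous_snd))
      continuous_const
  have hanti : Antitone shadow := fun M N hMN p hp n hn => hp n (hn.trans hMN)
  have hempty : far ∩ ⋂ N, shadow N = ∅ := by
    refine Set.eq_empty_of_forall_notMem fun ⟨x, y⟩ ⟨hxy, hsh⟩ => ?_
    have hne : x ≠ y := fun h => by
      simp only [far, Set.mem_ofPred_eq, h, dist_self] at hxy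
      linarith
    obtain ⟨n, hn⟩ := hexp x y hne
    exact (Set.mem_iInter.1 hsh n n le_rfl).not_gt hn
  obtain ⟨N, hN⟩ := hfar.elim_directed_family_closed shadow hshadow hempty hanti.directed_ge
  refine ⟨N, fun x y hxy => not_le.1 fun hfar' => ?_⟩
  exact (Set.eq_empty_iff_forall_notMem.1 hN) (x, y) ⟨hfar', hxy⟩

theorem tendsto_dist_iterate_of_forall_dist_iterate_le (hexp : IsPositivelyExpansiveWith f c)
    (hf : Continuous f) {g : X → X} (hfg : Function.LeftInverse f g) {x y : X}
    (hxy : ∀ n, dist (g^[n] x) (g^[n] y) ≤ c) :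
    Tendsto (fun n => dist (g^[n] x) (g^[n] y)) atTop (𝓝 0) := by
  refine Metric.tendsto_atTop.2 fun δ hδ => ?_
  obtain ⟨N, hN⟩ := hexp.exists_dist_lt hf hδ
  refine ⟨N, fun n hn => ?_⟩
  rw [Real.dist_eq, sub_zero, abs_of_nonneg dist_nonneg]
  refine hN _ _ fun k hk => ?_
  rw [hfg.iterate_apply_iterate_of_le (hk.trans hn),
    hfg.iterate_apply_iterate_of_le (hk.trans hn)]
  exact hxy (n - k)

/-- The first `N` backward iterates are controlled by uniform continuity; a later one by
induction, since the `N` iterates after it make its image under `e` small (`exists_dist_lt`)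
and `e.symm` is uniformly continuous. -/
theorem exists_forall_dist_iterate_symm_le {e : X ≃ₜ X} (hexp : IsPositivelyExpansiveWith e c)
    (hc : 0 < c) :
    ∃ ε > 0, ∀ x y : X, dist x y < ε → ∀ n, dist (e.symm^[n] x) (e.symm^[n] y) ≤ c := by
  set g : X → X := ⇑e.symm
  have hfg : Function.LeftInverse e g := e.apply_symm_apply
  obtain ⟨δ, hδ, hgδ⟩ := Metric.uniformContinuous_iff.1
    (CompactSpace.uniformContinuous_of_continuous e.symm.continuous) c hc
  obtain ⟨N, hN⟩ := hexp.exists_dist_lt e.continuous hδ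
  have hequi : UniformEquicontinuous fun n : Fin (N + 1) => g^[n] :=
    uniformEquicontinuous_finite.2 fun n =>
      CompactSpace.uniformContinuous_of_continuous (e.symm.continuous.iterate n)
  obtain ⟨ε, hε, hεN⟩ := Metric.uniformEquicontinuous_iff.1 hequi c hc
  refine ⟨ε, hε, fun x y hxy n => ?_⟩
  induction n using Nat.strong_induction_on with
  | _ n ih =>
    rcases le_or_gt n N with hnN | hNn
    · exact (hεN x y hxy ⟨n, Nat.lt_succ_of_le hnN⟩).le
    · obtain ⟨m, rfl⟩ := Nat.exists_eq_add_of_lt hNn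
      have hclose : dist (g^[N + m] x) (g^[N + m] y) < δ := hN _ _ fun k hk => by
        rw [hfg.iterate_apply_iterate_of_le (by omega), hfg.iterate_apply_iterate_of_le (by omega)]
        exact ih _ (by omega)
      rw [Function.iterate_succ_apply', Function.iterate_succ_apply']
      exact (hgδ hclose).le

end IsPositivelyExpansiveWith

end

theorem stmt7 {X : Type*} [MetricSpace X] [CompactSpace X] (f : X ≃ₜ X)
    (hexp : ∃ ρ > (0:ℝ), ∀ x y : X, x ≠ y →
      ∃ n : ℕ, ρ < dist ((⇑f)^[n] x) ((⇑f)^[n] y)) :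
    ∃ ε > (0:ℝ), ∀ x y : X, dist x y < ε →
      Tendsto (fun n : ℕ => dist ((⇑f.symm)^[n] x) ((⇑f.symm)^[n] y)) atTop (𝓝 0) := by
  obtain ⟨c, hc, hexp⟩ := hexp
  replace hexp : IsPositivelyExpansiveWith f c := hexp
  obtain ⟨ε, hε, hbounded⟩ := hexp.exists_forall_dist_iterate_symm_le hc
  exact ⟨ε, hε, fun x y hxy => hexp.tendsto_dist_iterate_of_forall_dist_iterate_le
    f.continuous f.apply_symm_apply (hbounded x y hxy)⟩
end

section
/- Let X be a compact metric space and U₁, ..., Uₘ a partition of X into nonempty disjoint sets, and g : X → X a homeomorphism such that diam(gⁿ(Uᵢ)) → 0 as n → ∞ for each i. Then each Uᵢ is a single point and X is finite of cardinality m. -/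
/-!
Fix a finite set `s ⊆ X`. Once `diam (gⁿ(Uᵢ))` is below every distance between distinct points of
`s`, each of the sets `gⁿ(U₁), …, gⁿ(Uₘ)`, which cover `X`, meets `s` in at most one point, so
`|s| ≤ m`. Hence `X` is finite, and taking `s = X` shows that each `gⁿ(Uᵢ)`, and so each `Uᵢ`, is a
single point.
-/

open Filter Topology Function Metric Set

theorem Finset.card_le_card_of_forall_subsingleton_inter {α ι : Type*} [Fintype ι]
    {V : ι → Set α} {s : Finset α} (hcover : (s : Set α) ⊆ ⋃ i, V i)
    (hV : ∀ i, ((s : Set α) ∩ V i).Subsingleton) : s.card ≤ Fintype.card ι := by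
  choose f hf using fun x : s => mem_iUnion.1 (hcover x.2)
  calc s.card = Fintype.card s := (Fintype.card_coe s).symm
    _ ≤ Fintype.card ι := Fintype.card_le_of_injective f fun x y hxy =>
      Subtype.ext (hV (f y) ⟨x.2, hxy ▸ hf x⟩ ⟨y.2, hf y⟩)

theorem iUnion_iterate_image_eq_univ {X ι : Type*} {f : X → X} (hf : Surjective f)
    {U : ι → Set X} (hU : ⋃ i, U i = univ) (n : ℕ) : ⋃ i, f^[n] '' U i = univ := by
  rw [← image_iUnion, hU, image_univ_of_surjective (hf.iterate n)]

section MetricSpace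

variable {X : Type*} [MetricSpace X]

theorem subsingleton_inter_of_pairwise_diam_lt_dist {s V : Set X} (hV : Bornology.IsBounded V)
    (hs : s.Pairwise fun x y => diam V < dist x y) : (s ∩ V).Subsingleton := by
  intro x hx y hy
  by_contra hxy
  exact (dist_le_diam_of_mem hV hx.2 hy.2).not_gt (hs hx.1 hy.1 hxy)

theorem eventually_pairwise_diam_lt_dist {V : ℕ → Set X}
    (hV : Tendsto (fun n => diam (V n)) atTop (𝓝 0)) {s : Set X} (hs : s.Finite) :
    ∀ᶠ n in atTop, s.Pairwise fun x y => diam (V n) < dist x y := by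
  simp only [Set.Pairwise, eventually_all_finite hs]
  exact fun x _ y _ => eventually_imp_distrib_left.2 fun hxy =>
    hV.eventually_lt_const (dist_pos.2 hxy)

variable [BoundedSpace X] {f : X → X}

theorem finite_of_tendsto_diam_iterate_image {ι : Type*} [Finite ι] (hf : Surjective f)
    {U : ι → Set X} (hU : ⋃ i, U i = univ)
    (hdiam : ∀ i, Tendsto (fun n => diam (f^[n] '' U i)) atTop (𝓝 0)) : Finite X := by
  have := Fintype.ofFinite ι
  by_contra hX
  have := not_finite_iff_infinite.1 hX
  obtain ⟨s, hs⟩ := Infinite.exists_subset_card_eq X (Fintype.card ι + 1)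
  obtain ⟨n, hn⟩ := (eventually_all.2 fun i =>
    eventually_pairwise_diam_lt_dist (hdiam i) s.finite_toSet).exists
  have hcard := Finset.card_le_card_of_forall_subsingleton_inter
    (iUnion_iterate_image_eq_univ hf hU n ▸ subset_univ _)
    fun i => subsingleton_inter_of_pairwise_diam_lt_dist (Bornology.IsBounded.all _) (hn i)
  omega

theorem subsingleton_of_tendsto_diam_iterate_image [Finite X] (hf : Injective f) {U : Set X}
    (hdiam : Tendsto (fun n => diam (f^[n] '' U)) atTop (𝓝 0)) : U.Subsingleton := by
  obtain ⟨n, hn⟩ := (eventually_pairwise_diam_lt_dist hdiam finite_univ).exists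
  have := subsingleton_inter_of_pairwise_diam_lt_dist (Bornology.IsBounded.all _) hn
  rwa [univ_inter, (hf.iterate n).subsingleton_image_iff] at this

end MetricSpace

theorem stmt10 {X : Type*} [MetricSpace X] [CompactSpace X] (g : X ≃ₜ X)
    (m : ℕ) (U : Fin m → Set X)
    (hne : ∀ i, (U i).Nonempty)
    (hdisj : Pairwise (Function.onFun Disjoint U))
    (hcover : ⋃ i, U i = Set.univ)
    (hdiam : ∀ i, Tendsto (fun n : ℕ => Metric.diam ((⇑g)^[n] '' U i)) atTop (𝓝 0)) :
    (∀ i, ∃ x : X, U i = {x}) ∧ Nat.card X = m := by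
  have := finite_of_tendsto_diam_iterate_image g.surjective hcover hdiam
  have hsingleton : ∀ i, ∃ x, U i = {x} := fun i =>
    exists_eq_singleton_iff_nonempty_subsingleton.2
      ⟨hne i, subsingleton_of_tendsto_diam_iterate_image g.injective (hdiam i)⟩
  choose x hx using hsingleton
  have hbij : Bijective x := by
    refine ⟨fun i j hij => hdisj.eq ?_, fun y => ?_⟩
    · simp only [onFun, hx, hij, disjoint_singleton, not_not]
    · obtain ⟨i, hi⟩ := mem_iUnion.1 (hcover ▸ mem_univ y)
      rw [hx i, mem_singleton_iff] at hi
      exact ⟨i, hi.symm⟩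
  exact ⟨fun i => ⟨x i, hx i⟩, by simpa using (Nat.card_eq_of_bijective x hbij).symm⟩
end

section
/- Let X be a compact metric space and f : X → X a homeomorphism such that the diagonal Δ is an attractor for f × f (there exists a compact neighborhood N of Δ with (f×f)(N) ⊆ int(N) and Inv N = Δ). Then there exists ε > 0 such that d(x,y) < ε implies d(fⁿ(x), fⁿ(y)) → 0 as n → ∞. -/
/-!
Since `F = f × f` maps `N` into itself, the orbit of a pair `p ∈ N` stays in the compact set
`N`. Each of its accumulation points `q` has its full orbit in `N`: `Fᵐ q` is a limit of the
points `Fᵐ⁺ⁿ p ∈ N`, and `F⁻ᵐ q` a limit of the points `Fⁿ⁻ᵐ p ∈ N`. So the orbit accumulates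
only on `Inv N = Δ`, i.e. it converges to the diagonal. As `X` is compact, the neighbourhood `N`
of `Δ` is an entourage, so it contains `{(x, y) | d(x, y) < ε}` for some `ε > 0`.
-/

open Set Filter Topology
open scoped omegaLimit

theorem omegaLimit_subset_of_eventually_mapsTo {τ α β : Type*} [TopologicalSpace β]
    {f : Filter τ} {ϕ : τ → α → β} {s : Set α} {C : Set β} (hC : IsClosed C)
    (h : ∀ᶠ t in f, MapsTo (ϕ t) s C) : ω f ϕ s ⊆ C :=
  (omegaLimit_subset_closure_image2 f ϕ s h).trans
    (closure_minimal (image2_subset_iff.2 fun _ ht _ hx => ht hx) hC)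

namespace Homeomorph

variable {α : Type*} [TopologicalSpace α]

def maximalInvariantSet (g : α ≃ₜ α) (N : Set α) : Set α :=
  {p | ∀ n : ℕ, g^[n] p ∈ N ∧ g.symm^[n] p ∈ N}

theorem omegaLimit_iterate_subset_maximalInvariantSet (g : α ≃ₜ α) {N s : Set α}
    (hN : IsClosed N) (hgN : MapsTo g N N) (hs : s ⊆ N) :
    ω atTop (fun n => (⇑g)^[n]) s ⊆ g.maximalInvariantSet N := by
  intro q hq m
  constructor
  · refine omegaLimit_subset_of_eventually_mapsTo (hN.preimage (g.continuous.iterate m))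
      (Eventually.of_forall fun n x hx => ?_) hq
    rw [mem_preimage, ← Function.iterate_add_apply]
    exact hgN.iterate _ (hs hx)
  · refine omegaLimit_subset_of_eventually_mapsTo (hN.preimage (g.symm.continuous.iterate m))
      ((eventually_ge_atTop m).mono fun n hmn x hx => ?_) hq
    rw [mem_preimage, ← Nat.add_sub_cancel' hmn, Function.iterate_add_apply,
      (Function.LeftInverse.iterate g.symm_apply_apply m)]
    exact hgN.iterate _ (hs hx)

theorem tendsto_iterate_nhdsSet_maximalInvariantSet [T2Space α] (g : α ≃ₜ α) {N : Set α}
    (hN : IsCompact N) (hgN : MapsTo g N N) {p : α} (hp : p ∈ N) :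
    Tendsto (fun n => g^[n] p) atTop (𝓝ˢ (g.maximalInvariantSet N)) := by
  refine (hasBasis_nhdsSet _).tendsto_right_iff.2 fun U ⟨hU, hInvU⟩ => ?_
  have hω := g.omegaLimit_iterate_subset_maximalInvariantSet hN.isClosed hgN
    (singleton_subset_iff.2 hp)
  exact (eventually_mapsTo_of_isCompact_absorbing_of_isOpen_of_omegaLimit_subset atTop _ {p} hN
    (Eventually.of_forall fun n => mapsTo_singleton.2 (hgN.iterate n hp)) hU
    (hω.trans hInvU)).mono fun n h => h rfl

end Homeomorph

theorem stmt12 {X : Type*} [MetricSpace X] [CompactSpace X] (f : X ≃ₜ X)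
    (hattr : ∃ N : Set (X × X), IsCompact N ∧ N ∈ nhdsSet {p : X × X | p.1 = p.2} ∧
      (⇑(f.prodCongr f)) '' N ⊆ interior N ∧
      {p : X × X | ∀ n : ℕ, (⇑(f.prodCongr f))^[n] p ∈ N ∧
        (⇑(f.prodCongr f).symm)^[n] p ∈ N} = {p : X × X | p.1 = p.2}) :
    ∃ ε > (0:ℝ), ∀ x y : X, dist x y < ε →
      Tendsto (fun n : ℕ => dist ((⇑f)^[n] x) ((⇑f)^[n] y)) atTop (𝓝 0) := by
  obtain ⟨N, hN, hNΔ, hFN, hInv⟩ := hattr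
  set F := f.prodCongr f
  have hFmaps : MapsTo F N N := fun p hp => interior_subset (hFN (mem_image_of_mem F hp))
  rw [← diagonal, nhdsSet_diagonal_eq_uniformity] at hNΔ
  obtain ⟨ε, hε, hεN⟩ := Metric.mem_uniformity_dist.mp hNΔ
  refine ⟨ε, hε, fun x y hxy => ?_⟩
  have horbit : Tendsto (fun n => F^[n] (x, y)) atTop (𝓝ˢ (diagonal X)) := by
    rw [show diagonal X = F.maximalInvariantSet N from hInv.symm]
    exact F.tendsto_iterate_nhdsSet_maximalInvariantSet hN hFmaps (hεN hxy)
  have hdist : Tendsto (fun q : X × X => dist q.1 q.2) (𝓝ˢ (diagonal X)) (𝓝 0) :=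
    continuous_dist.tendsto_nhdsSet_nhds fun q hq => dist_eq_zero.2 hq
  simpa [F, Function.comp_def, Prod.map_iterate] using hdist.comp horbit
end

section
/- Let X be a locally compact metric space and f : X → X a continuous bounded map (admitting a compact window). Then f has a compact global attractor: there exists a compact invariant set Λ such that for every x ∈ X, ω(x) is nonempty and contained in Λ. -/
/-!
Enlarge the window `W` to a compact `K` with `W ⊆ interior K`. By compactness of `f '' K` every
point of `K` returns to `K` within a uniformly bounded time `N + 1`, so
`A = ⋃ n ≤ N, f^[n] '' K` is a compact forward-invariant set which every orbit eventually enters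
and never leaves. The attractor is `Λ = ⋂ n, f^[n] '' A`: a decreasing intersection of compact
sets, hence compact, and invariant because images commute with decreasing intersections of
compact sets. An ω-limit set is the set of cluster points of the orbit, which is nonempty since
the orbit is eventually in `A`, and lies in each closed set `f^[n] '' A` since the orbit is
eventually in each of them.
-/

open Set Function Filter

section Compactness

variable {X Y : Type*} [TopologicalSpace X] [TopologicalSpace Y]

theorem image_iInter_eq_of_antitone_isClosed [T1Space Y] {f : X → Y} (hf : Continuous f)
    {K : ℕ → Set X} (hanti : Antitone K) (hK₀ : IsCompact (K 0)) (hK : ∀ n, IsClosed (K n)) :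
    f '' ⋂ n, K n = ⋂ n, f '' K n := by
  refine (image_iInter_subset K f).antisymm fun y hy => ?_
  have hfiber : (⋂ n, K n ∩ f ⁻¹' {y}).Nonempty :=
    IsCompact.nonempty_iInter_of_sequence_nonempty_isCompact_isClosed _
      (fun n => inter_subset_inter_left _ (hanti n.le_succ))
      (fun n => by
        obtain ⟨x, hx, hxy⟩ := mem_iInter.1 hy n
        exact ⟨x, hx, hxy⟩)
      (hK₀.inter_right (isClosed_singleton.preimage hf))
      (fun n => (hK n).inter (isClosed_singleton.preimage hf))
  obtain ⟨x, hx⟩ := hfiber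
  rw [← iInter_inter] at hx
  exact ⟨x, hx⟩

theorem exists_uniform_iterate_mem_of_isCompact {f : X → X} (hf : Continuous f) {K U : Set X}
    (hK : IsCompact K) (hU : IsOpen U) (h : ∀ x ∈ K, ∃ n, f^[n] x ∈ U) :
    ∃ N, ∀ x ∈ K, ∃ n ≤ N, f^[n] x ∈ U := by
  obtain ⟨s, hs⟩ := hK.elim_finite_subcover (fun n => f^[n] ⁻¹' U)
    (fun n => hU.preimage (hf.iterate n)) fun x hx => mem_iUnion.2 (h x hx)
  refine ⟨s.sup id, fun x hx => ?_⟩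
  obtain ⟨n, hn, hxn⟩ := mem_iUnion₂.1 (hs hx)
  exact ⟨n, Finset.le_sup (f := id) hn, hxn⟩

end Compactness

section Dynamics

variable {X : Type*} {f : X → X}

theorem mapsTo_biUnion_iterate_image {K : Set X} {N : ℕ}
    (hret : ∀ x ∈ K, ∃ n ≤ N, f^[n + 1] x ∈ K) :
    MapsTo f (⋃ n ≤ N, f^[n] '' K) (⋃ n ≤ N, f^[n] '' K) := by
  intro a ha
  obtain ⟨n, hn, x, hx, rfl⟩ := mem_iUnion₂.1 ha
  rw [← iterate_succ_apply' f n x]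
  rcases hn.lt_or_eq with hlt | rfl
  · exact mem_iUnion₂.2 ⟨n + 1, hlt, x, hx, rfl⟩
  · obtain ⟨m, hm, hxm⟩ := hret x hx
    refine mem_iUnion₂.2 ⟨n - m, n.sub_le m, f^[m + 1] x, hxm, ?_⟩
    rw [← iterate_add_apply]
    congr 1
    omega

theorem eventually_iterate_mem_of_mapsTo {A : Set X} (hA : MapsTo f A A) {x : X} {n : ℕ}
    (hx : f^[n] x ∈ A) : ∀ᶠ m in atTop, f^[m] x ∈ A := by
  filter_upwards [eventually_ge_atTop n] with m hm
  rw [← Nat.sub_add_cancel hm, iterate_add_apply]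
  exact hA.iterate (m - n) hx

theorem eventually_iterate_mem_iterate_image {A : Set X} {x : X}
    (hx : ∀ᶠ m in atTop, f^[m] x ∈ A) (k : ℕ) : ∀ᶠ m in atTop, f^[m] x ∈ f^[k] '' A := by
  filter_upwards [(tendsto_sub_atTop_nat k).eventually hx, eventually_ge_atTop k] with m hm hkm
  exact ⟨f^[m - k] x, hm, by rw [← iterate_add_apply, Nat.add_sub_cancel' hkm]⟩

theorem antitone_iterate_image {A : Set X} (hA : MapsTo f A A) :
    Antitone fun n => f^[n] '' A :=
  antitone_nat_of_succ_le fun n => by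
    rw [iterate_succ, image_comp]
    exact image_mono hA.image_subset

theorem image_iInter_iterate_image [TopologicalSpace X] [T2Space X] (hf : Continuous f)
    {A : Set X} (hAc : IsCompact A) (hA : MapsTo f A A) :
    f '' ⋂ n, f^[n] '' A = ⋂ n, f^[n] '' A := by
  have hcomp : ∀ n, IsCompact (f^[n] '' A) := fun n => hAc.image (hf.iterate n)
  rw [image_iInter_eq_of_antitone_isClosed hf (antitone_iterate_image hA) (hcomp 0)
    fun n => (hcomp n).isClosed]
  simp_rw [image_image, ← iterate_succ_apply' f]
  exact (antitone_iterate_image hA).iInter_nat_add 1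

theorem exists_isCompact_mapsTo_absorbing [TopologicalSpace X] [WeaklyLocallyCompactSpace X]
    (hf : Continuous f) {W : Set X} (hW : IsCompact W) (hwin : ∀ x, ∃ n, f^[n] x ∈ W) :
    ∃ A, IsCompact A ∧ MapsTo f A A ∧ ∀ x, ∃ n, f^[n] x ∈ A := by
  obtain ⟨K, hK, hWK⟩ := exists_compact_superset hW
  obtain ⟨N, hN⟩ := exists_uniform_iterate_mem_of_isCompact hf (hK.image hf) isOpen_interior
    fun y _ => (hwin y).imp fun n hn => hWK hn
  refine ⟨⋃ n ≤ N, f^[n] '' K,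
    (finite_Iic N).isCompact_biUnion fun n _ => hK.image (hf.iterate n),
    mapsTo_biUnion_iterate_image fun x hx => ?_,
    fun x => (hwin x).imp fun n hn =>
      mem_iUnion₂.2 ⟨0, N.zero_le, _, interior_subset (hWK hn), rfl⟩⟩
  obtain ⟨n, hn, hxn⟩ := hN (f x) (mem_image_of_mem f hx)
  exact ⟨n, hn, interior_subset hxn⟩

end Dynamics

theorem iInter_closure_iUnion_gt_eq_setOf_mapClusterPt {X : Type*} [TopologicalSpace X]
    (u : ℕ → X) :
    ⋂ N : ℕ, closure (⋃ n > N, {u n}) = {y | MapClusterPt y atTop u} := by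
  have htail : ∀ N, ⋃ n > N, {u n} = u '' Ici (N + 1) := fun N => by
    ext; simp [eq_comm]
  ext y
  simp only [htail, mem_iInter, mem_ofPred, mapClusterPt_atTop_iff_forall_mem_closure]
  exact ⟨fun h N => closure_mono (image_mono (Ici_subset_Ici.2 N.le_succ)) (h N),
    fun h N => h (N + 1)⟩

theorem stmt13 {X : Type*} [MetricSpace X] [LocallyCompactSpace X]
    (f : X → X) (hf : Continuous f)
    (hbdd : ∃ W : Set X, IsCompact W ∧ ∀ x : X, ∃ n : ℕ, f^[n] x ∈ W) :
    ∃ Λ : Set X, IsCompact Λ ∧ f '' Λ = Λ ∧ ∀ x : X,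
      (⋂ N : ℕ, closure (⋃ n > N, {f^[n] x})).Nonempty ∧
      (⋂ N : ℕ, closure (⋃ n > N, {f^[n] x})) ⊆ Λ := by
  obtain ⟨W, hW, hwin⟩ := hbdd
  obtain ⟨A, hAc, hA, habs⟩ := exists_isCompact_mapsTo_absorbing hf hW hwin
  have hcomp : ∀ n, IsCompact (f^[n] '' A) := fun n => hAc.image (hf.iterate n)
  refine ⟨⋂ n, f^[n] '' A, (hcomp 0).of_isClosed_subset
      (isClosed_iInter fun n => (hcomp n).isClosed) (iInter_subset _ 0),
    image_iInter_iterate_image hf hAc hA, fun x => ?_⟩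
  obtain ⟨n, hn⟩ := habs x
  have hev := eventually_iterate_mem_of_mapsTo hA hn
  rw [iInter_closure_iUnion_gt_eq_setOf_mapClusterPt]
  obtain ⟨y, -, hy⟩ := hAc.exists_mapClusterPt_of_frequently hev.frequently
  exact ⟨⟨y, hy⟩, fun z hz => mem_iInter.2 fun k =>
    (hcomp k).isClosed.mem_of_mapClusterPt hz (eventually_iterate_mem_iterate_image hev k)⟩
end

section
/- Let X be a compact metric space and f : X → X a homeomorphism. Then f is expansive (there exists ρ > 0 such that d(fⁿ(x), fⁿ(y)) ≤ ρ for all n ∈ ℤ implies x = y) if and only if the diagonal Δ is an isolated invariant set for f × f, i.e., there is a compact neighborhood N of Δ whose maximal (f×f)-invariant subset equals Δ. -/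
/-!
For `ρ > 0` the set `{dist ≤ ρ}` is a compact neighbourhood of the diagonal, and its maximal
`f × f`-invariant subset is the diagonal exactly when `ρ` is an expansive constant. Conversely, on a
compact space every neighbourhood of the diagonal is an entourage, hence contains some `{dist ≤ ρ}`,
and maximal invariant subsets are monotone.
-/

open Set Filter Topology

def Equiv.maximalInvariantSet {α : Type*} (g : α ≃ α) (N : Set α) : Set α :=
  {p | ∀ n : ℕ, g^[n] p ∈ N ∧ g.symm^[n] p ∈ N}

def Equiv.IsExpansiveWith {X : Type*} [PseudoMetricSpace X] (f : X ≃ X) (ρ : ℝ) : Prop :=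
  ∀ x y : X, (∀ n : ℕ, dist (f^[n] x) (f^[n] y) ≤ ρ ∧ dist (f.symm^[n] x) (f.symm^[n] y) ≤ ρ) →
    x = y

namespace Equiv

variable {α : Type*}

theorem maximalInvariantSet_mono (g : α ≃ α) {N N' : Set α} (h : N ⊆ N') :
    g.maximalInvariantSet N ⊆ g.maximalInvariantSet N' :=
  fun _ hp n => ⟨h (hp n).1, h (hp n).2⟩

theorem mem_maximalInvariantSet_prodCongr {f : α ≃ α} {N : Set (α × α)} {x y : α} :
    (x, y) ∈ (f.prodCongr f).maximalInvariantSet N ↔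
      ∀ n : ℕ, (f^[n] x, f^[n] y) ∈ N ∧ (f.symm^[n] x, f.symm^[n] y) ∈ N := by
  simp only [maximalInvariantSet, mem_ofPred_eq, prodCongr_symm, prodCongr_apply, Prod.map_iterate,
    Prod.map_apply]

theorem diagonal_subset_maximalInvariantSet_prodCongr (f : α ≃ α) {N : Set (α × α)}
    (hN : diagonal α ⊆ N) : diagonal α ⊆ (f.prodCongr f).maximalInvariantSet N := by
  rintro ⟨x, y⟩ (rfl : x = y)
  exact mem_maximalInvariantSet_prodCongr.2 fun n => ⟨hN rfl, hN rfl⟩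

theorem isExpansiveWith_iff_maximalInvariantSet_subset_diagonal {X : Type*}
    [PseudoMetricSpace X] (f : X ≃ X) (ρ : ℝ) :
    f.IsExpansiveWith ρ ↔
      (f.prodCongr f).maximalInvariantSet {p | dist p.1 p.2 ≤ ρ} ⊆ diagonal X := by
  exact ⟨fun hf ⟨x, y⟩ hxy => hf x y (mem_maximalInvariantSet_prodCongr.1 hxy),
    fun hf x y hxy => hf (mem_maximalInvariantSet_prodCongr.2 hxy)⟩

end Equiv

theorem setOf_dist_le_mem_nhdsSet_diagonal {X : Type*} [PseudoMetricSpace X] {ρ : ℝ}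
    (hρ : 0 < ρ) : {p : X × X | dist p.1 p.2 ≤ ρ} ∈ 𝓝ˢ (diagonal X) :=
  nhdsSet_diagonal_le_uniformity <|
    mem_of_superset (Metric.dist_mem_uniformity hρ) fun p (hp : dist p.1 p.2 < ρ) =>
      show dist p.1 p.2 ≤ ρ from hp.le

theorem stmt14 {X : Type*} [MetricSpace X] [CompactSpace X] (f : X ≃ₜ X) :
    (∃ ρ > (0:ℝ), ∀ x y : X,
        (∀ n : ℕ, dist ((⇑f)^[n] x) ((⇑f)^[n] y) ≤ ρ ∧
          dist ((⇑f.symm)^[n] x) ((⇑f.symm)^[n] y) ≤ ρ) → x = y) ↔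
      ∃ N : Set (X × X), IsCompact N ∧ N ∈ nhdsSet {p : X × X | p.1 = p.2} ∧
        {p : X × X | ∀ n : ℕ, (⇑(f.prodCongr f))^[n] p ∈ N ∧
          (⇑(f.prodCongr f).symm)^[n] p ∈ N} = {p : X × X | p.1 = p.2} := by
  change (∃ ρ > (0:ℝ), f.toEquiv.IsExpansiveWith ρ) ↔ ∃ N : Set (X × X), IsCompact N ∧
    N ∈ 𝓝ˢ (diagonal X) ∧ (f.toEquiv.prodCongr f.toEquiv).maximalInvariantSet N = diagonal X
  simp only [Equiv.isExpansiveWith_iff_maximalInvariantSet_subset_diagonal]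
  constructor
  · rintro ⟨ρ, hρ, hexp⟩
    have hN := setOf_dist_le_mem_nhdsSet_diagonal (X := X) hρ
    refine ⟨_, (isClosed_le (continuous_fst.dist continuous_snd) continuous_const).isCompact,
      hN, hexp.antisymm ?_⟩
    exact Equiv.diagonal_subset_maximalInvariantSet_prodCongr _ (subset_of_mem_nhdsSet hN)
  · rintro ⟨N, -, hN, hmax⟩
    rw [nhdsSet_diagonal_eq_uniformity] at hN
    obtain ⟨ε, hε, hball⟩ := Metric.mem_uniformity_dist.mp hN
    refine ⟨ε / 2, by positivity, hmax ▸ Equiv.maximalInvariantSet_mono _ fun p hp => ?_⟩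
    exact hball (hp.trans_lt (half_lt_self hε))
end

section
/- Let X be a compact metric space and f : X → X a positively expansive homeomorphism. Then every point of X is isolated. -/
/-!
Compactness makes positive expansiveness uniform: for every `τ > 0` there is `N` such that two
points whose orbits stay `ρ`-close up to time `N` are `τ`-close. Since `f` is injective, the same
holds for the times `1, …, N`, so `ρ`-closeness of two orbits on a window of `N + 1` consecutive
times propagates back to time `0`. With uniform continuity of `f, …, f^N` this shows that there is
`r > 0` such that for every `τ > 0` some iterate `f^M` maps `τ`-separated points to `r`-separated
ones. Covering `X` by `k` balls of radius `r / 2` and pulling them back by `f^M` covers `X` by `k`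
sets of diameter `< τ`, for every `τ`, so `X` has at most `k` points.
-/

open Filter Topology Metric Function

theorem exists_forall_dist_le_imp_dist_lt {X Y : Type*} [MetricSpace X] [CompactSpace X]
    [PseudoMetricSpace Y] {φ : ℕ → X → Y} (hφ : ∀ n, Continuous (φ n)) {ρ : ℝ}
    (hsep : ∀ u v, u ≠ v → ∃ n, ρ < dist (φ n u) (φ n v)) {τ : ℝ} (hτ : 0 < τ) :
    ∃ N, ∀ u v, (∀ n ≤ N, dist (φ n u) (φ n v) ≤ ρ) → dist u v < τ := by
  let U : ℕ → Set (X × X) := fun N => {p | ∃ n ≤ N, ρ < dist (φ n p.1) (φ n p.2)}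
  have hU : ∀ N, IsOpen (U N) := by
    intro N
    simp only [U, ← exists_prop, Set.ofPred_exists]
    exact isOpen_biUnion fun n _ => isOpen_lt continuous_const
      (((hφ n).comp continuous_fst).dist ((hφ n).comp continuous_snd))
  have hcover : {p : X × X | τ ≤ dist p.1 p.2} ⊆ ⋃ N, U N := fun p hp =>
    let ⟨n, hn⟩ := hsep p.1 p.2 (dist_pos.1 (hτ.trans_le hp))
    Set.mem_iUnion.2 ⟨n, n, le_rfl, hn⟩
  have hK : IsCompact {p : X × X | τ ≤ dist p.1 p.2} :=
    (isClosed_le continuous_const continuous_dist).isCompact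
  obtain ⟨N, hN⟩ := hK.elim_directed_cover U hU hcover
    (Monotone.directed_le fun _ _ hMN _ ⟨n, hn, h⟩ => ⟨n, hn.trans hMN, h⟩)
  refine ⟨N, fun u v huv => not_le.1 fun h => ?_⟩
  obtain ⟨n, hn, hlt⟩ := hN (show (u, v) ∈ _ from h)
  exact (huv n hn).not_gt hlt

theorem Nat.forall_le_of_forall_window {P : ℕ → Prop} {N : ℕ}
    (step : ∀ m, (∀ n ≤ N, P (m + 1 + n)) → P m) :
    ∀ M, (∀ n ≤ N, P (M + n)) → ∀ n ≤ M + N, P n := by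
  intro M
  induction M with
  | zero => intro hwin n hn; simpa using hwin n (by omega)
  | succ M ih =>
    intro hwin n hn
    have hwin' : ∀ k ≤ N, P (M + k) := by
      rintro (_ | k) hk
      · exact step M hwin
      · simpa [Nat.add_assoc, Nat.add_comm 1 k] using hwin k (by omega)
    rcases Nat.lt_or_ge (M + N) n with hlt | hle
    · simpa [show n = M + 1 + N by omega] using hwin N le_rfl
    · exact ih hwin' n hle

theorem finite_of_forall_exists_fiber_dist_lt {X ι : Type*} [MetricSpace X] [Fintype ι]
    (h : ∀ τ > 0, ∃ c : X → ι, ∀ a b, c a = c b → dist a b < τ) : Finite X := by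
  by_contra hX
  have := not_finite_iff_infinite.1 hX
  obtain ⟨s, hs⟩ := Infinite.exists_subset_card_eq X (Fintype.card ι + 1)
  have hsep : ∀ᶠ τ in 𝓝[>] (0 : ℝ), ∀ p ∈ s.offDiag, τ ≤ dist p.1 p.2 :=
    (eventually_all_finset _).2 fun p hp => nhdsWithin_le_nhds <|
      eventually_le_nhds (dist_pos.2 (Finset.mem_offDiag.1 hp).2.2)
  obtain ⟨τ, hτs, hτ⟩ := (hsep.and self_mem_nhdsWithin).exists
  obtain ⟨c, hc⟩ := h τ hτ
  obtain ⟨a, ha, b, hb, hab, hcab⟩ := Finset.exists_ne_map_eq_of_card_lt_of_maps_to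
    (s := s) (t := Finset.univ) (by simp [hs]) fun x _ => Finset.mem_coe.2 (Finset.mem_univ (c x))
  exact (hc a b hcab).not_ge (hτs (a, b) (Finset.mem_offDiag.2 ⟨ha, hb, hab⟩))

theorem finite_of_forall_exists_dist_lt_imp_dist_lt {X : Type*} [MetricSpace X] [CompactSpace X]
    {r : ℝ} (hr : 0 < r) (h : ∀ τ > 0, ∃ g : X → X, ∀ a b, dist (g a) (g b) < r → dist a b < τ) :
    Finite X := by
  obtain ⟨t, ht⟩ := isCompact_univ.elim_finite_subcover (fun w : X => ball w (r / 2))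
    (fun _ => isOpen_ball) fun y _ => Set.mem_iUnion.2 ⟨y, mem_ball_self (half_pos hr)⟩
  have hcover : ∀ y, ∃ w : t, y ∈ ball (w : X) (r / 2) := fun y => by
    simpa using ht (Set.mem_univ y)
  choose cell hcell using hcover
  refine finite_of_forall_exists_fiber_dist_lt (ι := t) fun τ hτ => ?_
  obtain ⟨g, hg⟩ := h τ hτ
  refine ⟨fun a => cell (g a), fun a b hab => hg a b ?_⟩
  have ha := mem_ball.1 (hcell (g a))
  have hb := mem_ball.1 (hcell (g b))
  rw [show cell (g a) = cell (g b) from hab] at ha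
  linarith [dist_triangle_right (g a) (g b) (cell (g b))]

theorem exists_pos_forall_dist_iterate_lt_imp_dist_lt {X : Type*} [MetricSpace X]
    [CompactSpace X] {f : X → X} (hf : Continuous f) (hinj : Injective f) {ρ : ℝ} (hρ : 0 < ρ)
    (hexp : ∀ x y, x ≠ y → ∃ n, ρ < dist (f^[n] x) (f^[n] y)) :
    ∃ r > 0, ∀ τ > 0, ∃ M, ∀ a b, dist (f^[M] a) (f^[M] b) < r → dist a b < τ := by
  obtain ⟨N, hN⟩ := exists_forall_dist_le_imp_dist_lt (φ := fun n => f^[n + 1])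
    (fun n => hf.iterate _) (fun u v huv => by
      simpa only [iterate_succ_apply] using hexp (f u) (f v) (hinj.ne huv)) hρ
  have propagate : ∀ a b M, (∀ n ≤ N, dist (f^[M + n] a) (f^[M + n] b) ≤ ρ) →
      ∀ n ≤ M + N, dist (f^[n] a) (f^[n] b) ≤ ρ := fun a b =>
    Nat.forall_le_of_forall_window (P := fun n => dist (f^[n] a) (f^[n] b) ≤ ρ) fun m hm =>
      (hN _ _ fun n hn => by
        simpa only [← iterate_add_apply, add_comm, add_left_comm] using hm n hn).le
  obtain ⟨r, hr, hrN⟩ := Metric.uniformContinuous_iff.1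
    (CompactSpace.uniformContinuous_of_continuous
      (continuous_pi fun i : Fin (N + 1) => hf.iterate i)) ρ hρ
  refine ⟨r, hr, fun τ hτ => ?_⟩
  obtain ⟨M, hM⟩ := exists_forall_dist_le_imp_dist_lt (fun n => hf.iterate n) hexp hτ
  refine ⟨M, fun a b hab => hM a b fun n hn => propagate a b M (fun k hk => ?_) n (by omega)⟩
  rw [add_comm, iterate_add_apply, iterate_add_apply]
  exact (dist_le_pi_dist _ _ (⟨k, by omega⟩ : Fin (N + 1))).trans (hrN hab).le

theorem stmt19 {X : Type*} [MetricSpace X] [CompactSpace X] (f : X ≃ₜ X)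
    (hexp : ∃ ρ > (0:ℝ), ∀ x y : X, x ≠ y →
      ∃ n : ℕ, ρ < dist ((⇑f)^[n] x) ((⇑f)^[n] y)) :
    ∀ x : X, IsOpen ({x} : Set X) := by
  obtain ⟨ρ, hρ, hexp⟩ := hexp
  obtain ⟨r, hr, hexpand⟩ :=
    exists_pos_forall_dist_iterate_lt_imp_dist_lt f.continuous f.injective hρ hexp
  have : Finite X := finite_of_forall_exists_dist_lt_imp_dist_lt hr fun τ hτ =>
    let ⟨M, hM⟩ := hexpand τ hτ
    ⟨f^[M], hM⟩
  exact fun x => isOpen_discrete {x}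
end
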